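/- arXiv:0908.0742 — 2 statements merged into one kernel-verified Lean document; each statement's English description precedes it below -/
import Mathlib

section
/- Let v be a complex ℓ'×ℓ matrix with ‖v‖ < 1 and let u be a complex ℓ'×ℓ matrix with ‖u‖ < 1. With F_v(u) := v − (I − v v*)^{1/2} u (I − v* u)^{-1} (I − v* v)^{1/2}, the defect identity I − F_v(u)* F_v(u) = (I − v*v)^{1/2} (I − u*v)^{-1} (I − u*u) (I − v*u)^{-1} (I − v*v)^{1/2} holds. -/
open Matrix
open scoped Matrix.Norms.L2Operator ComplexOrder

/-- The positive semidefinite square root of a positive semidefinite matrix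
(removed from Mathlib; reinstated with its December 2024 definition). -/
noncomputable def Matrix.PosSemidef.sqrt {n 𝕜 : Type*} [Fintype n] [RCLike 𝕜] [DecidableEq n]
    {A : Matrix n n 𝕜} (hA : A.PosSemidef) : Matrix n n 𝕜 :=
  hA.1.eigenvectorUnitary.1 * diagonal ((↑) ∘ (√·) ∘ hA.1.eigenvalues) *
    (star hA.1.eigenvectorUnitary : Matrix n n 𝕜)

lemma psd_sqrt_conjTranspose {n : ℕ} {A : Matrix (Fin n) (Fin n) ℂ} (hA : A.PosSemidef) :
    hA.sqrtᴴ = hA.sqrt := by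
  rw [Matrix.PosSemidef.sqrt, conjTranspose_mul, conjTranspose_mul, diagonal_conjTranspose,
    Matrix.mul_assoc]
  congr 1
  · rw [star_eq_conjTranspose, conjTranspose_conjTranspose]
  · congr 1
    · congr 1
      funext i
      simp

lemma psd_sqrt_mul_self {n : ℕ} {A : Matrix (Fin n) (Fin n) ℂ} (hA : A.PosSemidef) :
    hA.sqrt * hA.sqrt = A := by
  have hU' : star (hA.1.eigenvectorUnitary : Matrix (Fin n) (Fin n) ℂ)
      * (hA.1.eigenvectorUnitary : Matrix (Fin n) (Fin n) ℂ) = 1 :=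
    Matrix.mem_unitaryGroup_iff'.mp hA.1.eigenvectorUnitary.2
  conv_rhs => rw [hA.1.spectral_theorem, Unitary.conjStarAlgAut_apply]
  rw [Matrix.PosSemidef.sqrt]
  calc _ = (hA.1.eigenvectorUnitary : Matrix (Fin n) (Fin n) ℂ) *
        (diagonal ((↑) ∘ (√·) ∘ hA.1.eigenvalues) * (star (hA.1.eigenvectorUnitary : Matrix (Fin n) (Fin n) ℂ) * (hA.1.eigenvectorUnitary : Matrix (Fin n) (Fin n) ℂ)) *
        diagonal ((↑) ∘ (√·) ∘ hA.1.eigenvalues)) * star (hA.1.eigenvectorUnitary : Matrix (Fin n) (Fin n) ℂ) := by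
          simp only [Matrix.mul_assoc]; rfl
    _ = _ := by
      rw [hU', Matrix.mul_one, diagonal_mul_diagonal]
      congr 3
      funext i
      simp only [Function.comp]
      rw [← Complex.ofReal_mul, Real.mul_self_sqrt (hA.eigenvalues_nonneg i)]
      rfl

open Polynomial in
lemma aeval_intertwine {m n : ℕ} (w : Matrix (Fin m) (Fin n) ℂ)
    (M₁ : Matrix (Fin n) (Fin n) ℂ) (M₂ : Matrix (Fin m) (Fin m) ℂ)
    (h : w * M₁ = M₂ * w) (p : Polynomial ℝ) :
    w * (aeval M₁ p) = (aeval M₂ p) * w := by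
  have hpow : ∀ k : ℕ, w * M₁ ^ k = M₂ ^ k * w := by
    intro k; induction k with
    | zero => simp
    | succ k ih =>
      rw [pow_succ, pow_succ, ← Matrix.mul_assoc, ih, Matrix.mul_assoc, h, ← Matrix.mul_assoc]
  rw [aeval_eq_sum_range, aeval_eq_sum_range, Matrix.mul_sum, Matrix.sum_mul]
  refine Finset.sum_congr rfl fun i _ => ?_
  rw [Matrix.mul_smul, Matrix.smul_mul, hpow]

open Polynomial in
lemma aeval_conj {n : ℕ} (U D : Matrix (Fin n) (Fin n) ℂ)
    (hU : U * star U = 1) (hU' : star U * U = 1) (p : Polynomial ℝ) :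
    aeval (U * D * star U) p = U * aeval D p * star U := by
  have h : U * D = (U * D * star U) * U := by
    rw [Matrix.mul_assoc (U * D), hU', Matrix.mul_one]
  have := aeval_intertwine U D (U * D * star U) h p
  calc aeval (U * D * star U) p
      = aeval (U * D * star U) p * (U * star U) := by rw [hU, Matrix.mul_one]
    _ = (U * aeval D p) * star U := by rw [← Matrix.mul_assoc, ← this]

open Polynomial in
lemma aeval_diagonal {n : ℕ} (d : Fin n → ℝ) (p : Polynomial ℝ) :
    aeval (Matrix.diagonal (fun i => (d i : ℂ))) p
      = Matrix.diagonal (fun i => ((p.eval (d i) : ℝ) : ℂ)) := by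
  have h1 : Matrix.diagonal (fun i => (d i : ℂ))
      = Matrix.diagonalAlgHom (n := Fin n) (α := ℂ) ℝ (fun i => (d i : ℂ)) := rfl
  rw [h1, aeval_algHom_apply]
  show Matrix.diagonal ((aeval fun i => ((d i : ℝ) : ℂ)) p) = _
  refine congrArg Matrix.diagonal (funext fun i => ?_)
  have h2 := aeval_algHom_apply (Pi.evalAlgHom ℝ (fun _ : Fin n => ℂ) i)
    (fun j => ((d j : ℝ) : ℂ)) p
  refine h2.symm.trans ?_
  show (aeval (algebraMap ℝ ℂ (d i))) p = _
  rw [aeval_algebraMap_apply_eq_algebraMap_eval]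
  rfl

open Polynomial in
lemma sqrt_eq_aeval {n : ℕ} {A : Matrix (Fin n) (Fin n) ℂ} (hA : A.PosSemidef)
    (p : Polynomial ℝ)
    (hp : ∀ i, p.eval (hA.1.eigenvalues i) = Real.sqrt (hA.1.eigenvalues i)) :
    hA.sqrt = aeval A p := by
  have hU : (hA.1.eigenvectorUnitary : Matrix (Fin n) (Fin n) ℂ)
      * star (hA.1.eigenvectorUnitary : Matrix (Fin n) (Fin n) ℂ) = 1 :=
    Matrix.mem_unitaryGroup_iff.mp hA.1.eigenvectorUnitary.2
  have hU' : star (hA.1.eigenvectorUnitary : Matrix (Fin n) (Fin n) ℂ)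
      * (hA.1.eigenvectorUnitary : Matrix (Fin n) (Fin n) ℂ) = 1 :=
    Matrix.mem_unitaryGroup_iff'.mp hA.1.eigenvectorUnitary.2
  conv_rhs => rw [hA.1.spectral_theorem, Unitary.conjStarAlgAut_apply]
  rw [aeval_conj _ _ hU hU']
  have hd : (Matrix.diagonal (RCLike.ofReal ∘ hA.1.eigenvalues) : Matrix (Fin n) (Fin n) ℂ)
      = Matrix.diagonal (fun i => ((hA.1.eigenvalues i : ℝ) : ℂ)) := rfl
  rw [hd, aeval_diagonal]
  have he : (fun i => ((p.eval (hA.1.eigenvalues i) : ℝ) : ℂ))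
      = ((↑) ∘ Real.sqrt ∘ hA.1.eigenvalues) := funext fun i => by rw [hp i]; rfl
  rw [he]
  rfl

lemma sqrt_intertwine {l l' : ℕ} (v : Matrix (Fin l') (Fin l) ℂ)
    (h1 : (1 - vᴴ * v).PosSemidef) (h2 : (1 - v * vᴴ).PosSemidef) :
    v * h1.sqrt = h2.sqrt * v := by
  classical
  set s : Finset ℝ :=
    Finset.image h1.1.eigenvalues Finset.univ ∪ Finset.image h2.1.eigenvalues Finset.univ with hs
  set p := Lagrange.interpolate s id Real.sqrt with hpdef
  have hinj : Set.InjOn id (s : Set ℝ) := Function.injective_id.injOn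
  have hp1 : ∀ i, p.eval (h1.1.eigenvalues i) = Real.sqrt (h1.1.eigenvalues i) := fun i =>
    Lagrange.eval_interpolate_at_node _ hinj
      (Finset.mem_union_left _ (Finset.mem_image_of_mem _ (Finset.mem_univ i)))
  have hp2 : ∀ i, p.eval (h2.1.eigenvalues i) = Real.sqrt (h2.1.eigenvalues i) := fun i =>
    Lagrange.eval_interpolate_at_node _ hinj
      (Finset.mem_union_right _ (Finset.mem_image_of_mem _ (Finset.mem_univ i)))
  rw [sqrt_eq_aeval h1 p hp1, sqrt_eq_aeval h2 p hp2]
  refine aeval_intertwine v _ _ ?_ p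
  rw [Matrix.mul_sub, Matrix.sub_mul, Matrix.mul_one, Matrix.one_mul, Matrix.mul_assoc]

lemma bracket {n : ℕ} (a b d C C' : Matrix (Fin n) (Fin n) ℂ)
    (hC1 : (1 - a) * C = 1) (hC2 : C * (1 - a) = 1)
    (hC'1 : (1 - b) * C' = 1) (hC'2 : C' * (1 - b) = 1) :
    1 + a * C + C' * b - C' * (d - b * a) * C = C' * (1 - d) * C := by
  have key : (1 - b) * (1 + a * C + C' * b - C' * (d - b * a) * C) * (1 - a) = 1 - d := by
    calc (1 - b) * (1 + a * C + C' * b - C' * (d - b * a) * C) * (1 - a)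
        = (1 - b) * (1 - a) + (1 - b) * a * (C * (1 - a)) + ((1 - b) * C') * (b * (1 - a))
            - ((1 - b) * C') * ((d - b * a) * (C * (1 - a))) := by noncomm_ring
      _ = 1 - d := by
          rw [hC2, hC'1]; simp only [mul_one, one_mul]; noncomm_ring
  calc 1 + a * C + C' * b - C' * (d - b * a) * C
      = (C' * (1 - b)) * (1 + a * C + C' * b - C' * (d - b * a) * C) * ((1 - a) * C) := by
        rw [hC'2, hC1, one_mul, mul_one]
    _ = C' * ((1 - b) * (1 + a * C + C' * b - C' * (d - b * a) * C) * (1 - a)) * C := by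
        noncomm_ring
    _ = C' * (1 - d) * C := by rw [key]

noncomputable def Fv {l l' : ℕ} (v : Matrix (Fin l') (Fin l) ℂ)
    (h1 : (1 - vᴴ * v).PosSemidef) (h2 : (1 - v * vᴴ).PosSemidef)
    (u : Matrix (Fin l') (Fin l) ℂ) : Matrix (Fin l') (Fin l) ℂ :=
  v - h2.sqrt * u * (1 - vᴴ * u)⁻¹ * h1.sqrt

theorem stmt_11 (l l' : ℕ) (v u : Matrix (Fin l') (Fin l) ℂ)
    (hv : ‖v‖ < 1) (hu : ‖u‖ < 1)
    (h1 : (1 - vᴴ * v).PosSemidef) (h2 : (1 - v * vᴴ).PosSemidef) :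
    1 - (Fv v h1 h2 u)ᴴ * (Fv v h1 h2 u) =
      h1.sqrt * (1 - uᴴ * v)⁻¹ * (1 - uᴴ * u) * (1 - vᴴ * u)⁻¹ * h1.sqrt := by
  haveI : CompleteSpace (Matrix (Fin l) (Fin l) ℂ) := FiniteDimensional.complete ℂ _
  have hnorm : ‖vᴴ * u‖ < 1 := by
    refine lt_of_le_of_lt (Matrix.l2_opNorm_mul _ _) ?_
    rw [Matrix.l2_opNorm_conjTranspose]
    nlinarith [norm_nonneg v, norm_nonneg u]
  have hnorm' : ‖uᴴ * v‖ < 1 := by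
    refine lt_of_le_of_lt (Matrix.l2_opNorm_mul _ _) ?_
    rw [Matrix.l2_opNorm_conjTranspose]
    nlinarith [norm_nonneg v, norm_nonneg u]
  have hd1 : IsUnit (1 - vᴴ * u).det :=
    (Matrix.isUnit_iff_isUnit_det _).mp (Units.oneSub _ hnorm).isUnit
  have hd2 : IsUnit (1 - uᴴ * v).det :=
    (Matrix.isUnit_iff_isUnit_det _).mp (Units.oneSub _ hnorm').isUnit
  set S := h1.sqrt with hS
  set T := h2.sqrt with hT
  set C := (1 - vᴴ * u)⁻¹ with hC
  set C' := (1 - uᴴ * v)⁻¹ with hC'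
  have hC1 : (1 - vᴴ * u) * C = 1 := Matrix.mul_nonsing_inv _ hd1
  have hC2 : C * (1 - vᴴ * u) = 1 := Matrix.nonsing_inv_mul _ hd1
  have hC'1 : (1 - uᴴ * v) * C' = 1 := Matrix.mul_nonsing_inv _ hd2
  have hC'2 : C' * (1 - uᴴ * v) = 1 := Matrix.nonsing_inv_mul _ hd2
  have hSH : Sᴴ = S := psd_sqrt_conjTranspose h1
  have hTH : Tᴴ = T := psd_sqrt_conjTranspose h2
  have hSS : S * S = 1 - vᴴ * v := psd_sqrt_mul_self h1
  have hTT : T * T = 1 - v * vᴴ := psd_sqrt_mul_self h2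
  have hTv : T * v = v * S := (sqrt_intertwine v h1 h2).symm
  have hvT : vᴴ * T = S * vᴴ := by
    calc vᴴ * T = (T * v)ᴴ := by rw [conjTranspose_mul, hTH]
      _ = (v * S)ᴴ := by rw [hTv]
      _ = S * vᴴ := by rw [conjTranspose_mul, hSH]
  have hCH : Cᴴ = C' := by
    rw [hC, Matrix.conjTranspose_nonsing_inv]
    congr 1
    simp
  have hFH : (Fv v h1 h2 u)ᴴ = vᴴ - S * (C' * (uᴴ * T)) := by
    rw [Fv, ← hS, ← hT, ← hC]
    simp only [conjTranspose_sub, conjTranspose_mul, hSH, hTH, hCH, Matrix.mul_assoc]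
  rw [hFH, show Fv v h1 h2 u = v - T * u * C * S from rfl]
  calc 1 - (vᴴ - S * (C' * (uᴴ * T))) * (v - T * u * C * S)
      = (1 - vᴴ * v) + (vᴴ * T) * (u * (C * S)) + S * (C' * (uᴴ * (T * v)))
          - S * (C' * (uᴴ * ((T * T) * (u * (C * S))))) := by
        simp only [Matrix.sub_mul, Matrix.mul_sub, Matrix.mul_assoc]
        abel
    _ = S * S + (S * vᴴ) * (u * (C * S)) + S * (C' * (uᴴ * (v * S)))
          - S * (C' * (uᴴ * ((1 - v * vᴴ) * (u * (C * S))))) := by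
        rw [hvT, hTv, hTT, ← hSS]
    _ = S * (1 + (vᴴ * u) * C + C' * (uᴴ * v)
          - C' * ((uᴴ * u) - (uᴴ * v) * (vᴴ * u)) * C) * S := by
        simp only [Matrix.mul_sub, Matrix.sub_mul, Matrix.mul_add, Matrix.add_mul,
          Matrix.mul_assoc, Matrix.mul_one, Matrix.one_mul]
    _ = S * (C' * (1 - uᴴ * u) * C) * S := by
        rw [bracket (vᴴ * u) (uᴴ * v) (uᴴ * u) C C' hC1 hC2 hC'1 hC'2]
    _ = S * C' * (1 - uᴴ * u) * C * S := by
        simp only [Matrix.mul_assoc]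
end

section
/- Let E be a finite-dimensional normed vector space over ℂ and let σ : E → E be a linear map such that (1) ‖σ(x)‖ ≤ ‖x‖ for all x ∈ E, and (2) for every x ∈ E and every positive integer n, ‖σ(x)‖ ≤ ‖(1/n) ∑_{j=1}^n σ^j(x)‖. Then σ is idempotent: σ ∘ σ = σ. -/
theorem stmt_14 (E : Type*) [NormedAddCommGroup E] [NormedSpace ℂ E]
    [FiniteDimensional ℂ E] (σ : Module.End ℂ E)
    (h1 : ∀ x : E, ‖σ x‖ ≤ ‖x‖)
    (h2 : ∀ (x : E) (n : ℕ), 0 < n →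
      ‖σ x‖ ≤ ‖((n : ℂ)⁻¹) • ∑ j ∈ Finset.Icc 1 n, (σ ^ j) x‖) :
    σ ∘ₗ σ = σ := by
  ext x
  simp only [LinearMap.comp_apply]
  have hpow : ∀ k : ℕ, ∀ z : E, ‖(σ ^ k) z‖ ≤ ‖z‖ := by
    intro k
    induction k with
    | zero => intro z; simp
    | succ n ih =>
        intro z
        rw [pow_succ, Module.End.mul_apply]
        exact (ih _).trans (h1 z)
  set y := x - σ x with hy
  have key : ∀ n : ℕ, 0 < n → ‖σ y‖ ≤ 2 * ‖x‖ / n := by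
    intro n hn
    have htel : ∑ j ∈ Finset.Icc 1 n, (σ ^ j) y = σ x - (σ ^ (n + 1)) x := by
      have hstep : ∀ j, (σ ^ j) y = (σ ^ j) x - (σ ^ (j + 1)) x := by
        intro j
        rw [hy, map_sub, pow_succ, Module.End.mul_apply]
      clear hn
      induction n with
      | zero => simp [pow_one]
      | succ k ih =>
          rw [Finset.sum_Icc_succ_top (by omega), ih, hstep]
          abel_nf

    have := h2 y n hn
    rw [htel, norm_smul] at this
    refine this.trans ?_
    have hnorm : ‖σ x - (σ ^ (n + 1)) x‖ ≤ 2 * ‖x‖ := by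
      calc ‖σ x - (σ ^ (n + 1)) x‖ ≤ ‖σ x‖ + ‖(σ ^ (n + 1)) x‖ := norm_sub_le _ _
        _ ≤ ‖x‖ + ‖x‖ := add_le_add (h1 x) (hpow _ x)
        _ = 2 * ‖x‖ := by ring
    have hninv : ‖((n : ℂ)⁻¹)‖ = (n : ℝ)⁻¹ := by
      simp
    rw [hninv, div_eq_inv_mul]
    exact mul_le_mul_of_nonneg_left hnorm (by positivity)
  have hz : ‖σ y‖ = 0 := by
    by_contra h
    have hpos : 0 < ‖σ y‖ := lt_of_le_of_ne (norm_nonneg _) (Ne.symm h)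
    obtain ⟨n, hn⟩ := exists_nat_gt (2 * ‖x‖ / ‖σ y‖)
    have hge : (0:ℝ) ≤ 2 * ‖x‖ / ‖σ y‖ := by positivity
    have hn0 : 0 < n := Nat.cast_pos.mp (lt_of_le_of_lt hge hn)
    have hk := key n hn0
    rw [div_lt_iff₀ hpos] at hn
    rw [le_div_iff₀ (by exact_mod_cast hn0 : (0:ℝ) < n)] at hk
    nlinarith
  have : σ y = 0 := norm_eq_zero.mp hz
  rw [hy, map_sub] at this
  exact (sub_eq_zero.mp this).symm
end
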